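/- arXiv:1011.4597 — 4 statements merged into one kernel-verified Lean document; each statement's English description precedes it below -/
import Mathlib

section
/- For the function φ_n(y) = y^n/(n-1)! - Σ_{i=0}^{n-1} y^i/i!, defined for integer n ≥ 1, the equation φ_n(y) = 0 has a unique positive solution. -/
/-!
Dividing by `y ^ n`, the equation `φ_n(y) = 0` says `(∑_{i<n} y^i/i!) / y^n = 1/(n-1)!` for
`y > 0`. The left side is `∑_{i<n} (1/i!) · y^(i-n)`, a sum of decreasing functions of `y` whose
`i = 0` term decreases strictly from `+∞` to `0`; so it takes every positive value exactly once.
-/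

open Finset Set

lemma pow_mul_pow_le_pow_mul_pow {a b : ℝ} (ha : 0 ≤ a) (hab : a ≤ b) {i n : ℕ} (hin : i ≤ n) :
    b ^ i * a ^ n ≤ a ^ i * b ^ n := by
  obtain ⟨k, rfl⟩ := Nat.exists_eq_add_of_le hin
  have hb : 0 ≤ b := ha.trans hab
  calc b ^ i * a ^ (i + k) = a ^ i * b ^ i * a ^ k := by ring
    _ ≤ a ^ i * b ^ i * b ^ k := by gcongr
    _ = a ^ i * b ^ (i + k) := by ring

section SumMulPowDivPow

variable {n : ℕ} {c : ℕ → ℝ}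

lemma strictAntiOn_sum_mul_pow_div_pow (hc : ∀ i ∈ range n, 0 ≤ c i) (hc0 : 0 < c 0)
    (hn : 0 < n) : StrictAntiOn (fun y : ℝ => (∑ i ∈ range n, c i * y ^ i) / y ^ n) (Ioi 0) := by
  intro a (ha : 0 < a) b (hb : 0 < b) hab
  rw [div_lt_div_iff₀ (pow_pos hb n) (pow_pos ha n), sum_mul, sum_mul]
  refine sum_lt_sum (fun i hi => ?_) ⟨0, mem_range.2 hn, ?_⟩
  · rw [mul_assoc, mul_assoc]
    exact mul_le_mul_of_nonneg_left
      (pow_mul_pow_le_pow_mul_pow ha.le hab.le (mem_range.1 hi).le) (hc i hi)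
  · simpa using mul_lt_mul_of_pos_left (pow_lt_pow_left₀ hab ha.le hn.ne') hc0

lemma div_le_sum_mul_pow_div_pow (hc : ∀ i ∈ range n, 0 ≤ c i) (hn : 0 < n) {y : ℝ}
    (hy : 0 < y) (hy1 : y ≤ 1) : c 0 / y ≤ (∑ i ∈ range n, c i * y ^ i) / y ^ n := by
  have hc0 : c 0 ≤ ∑ i ∈ range n, c i * y ^ i := by
    simpa using single_le_sum (f := fun i => c i * y ^ i)
      (fun i hi => mul_nonneg (hc i hi) (pow_nonneg hy.le i)) (mem_range.2 hn)
  calc c 0 / y ≤ c 0 / y ^ n :=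
        div_le_div_of_nonneg_left (hc 0 (mem_range.2 hn)) (pow_pos hy n)
          (pow_le_of_le_one hy.le hy1 hn.ne')
    _ ≤ _ := by gcongr

lemma sum_mul_pow_div_pow_le (hc : ∀ i ∈ range n, 0 ≤ c i) {y : ℝ} (hy : 1 ≤ y) :
    (∑ i ∈ range n, c i * y ^ i) / y ^ n ≤ (∑ i ∈ range n, c i) / y := by
  have hy0 : 0 < y := zero_lt_one.trans_le hy
  rw [div_le_div_iff₀ (pow_pos hy0 n) hy0, sum_mul, sum_mul]
  refine sum_le_sum fun i hi => ?_
  obtain ⟨k, rfl⟩ := Nat.exists_eq_add_of_lt (mem_range.1 hi)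
  calc c i * y ^ i * y = c i * y ^ (i + 1) := by ring
    _ ≤ c i * y ^ (i + k + 1) := by gcongr; exacts [hc i hi, by omega]

lemma existsUnique_pos_sum_mul_pow_div_pow_eq (hc : ∀ i ∈ range n, 0 ≤ c i) (hc0 : 0 < c 0)
    (hn : 0 < n) {t : ℝ} (ht : 0 < t) :
    ∃! y : ℝ, 0 < y ∧ (∑ i ∈ range n, c i * y ^ i) / y ^ n = t := by
  set f : ℝ → ℝ := fun y => (∑ i ∈ range n, c i * y ^ i) / y ^ n
  set S := ∑ i ∈ range n, c i
  have hS : 0 < S := hc0.trans_le <| single_le_sum hc (mem_range.2 hn)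
  set a := min 1 (c 0 / t)
  set b := max 1 (S / t)
  have ha : 0 < a := lt_min one_pos (div_pos hc0 ht)
  have hfa : t ≤ f a := calc
    t ≤ c 0 / a := (le_div_comm₀ ht ha).2 (min_le_right _ _)
    _ ≤ f a := div_le_sum_mul_pow_div_pow hc hn ha (min_le_left _ _)
  have hfb : f b ≤ t := calc
    f b ≤ S / b := sum_mul_pow_div_pow_le hc (le_max_left _ _)
    _ ≤ t := (div_le_comm₀ (ha.trans_le ((min_le_left _ _).trans (le_max_left _ _))) ht).2
      (le_max_right _ _)
  have hcont : ContinuousOn f (Icc a b) :=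
    ContinuousOn.div (by fun_prop) (by fun_prop) fun y hy => (pow_pos (ha.trans_le hy.1) n).ne'
  obtain ⟨y, hy, hfy⟩ := intermediate_value_Icc' ((min_le_left _ _).trans (le_max_left _ _))
    hcont ⟨hfb, hfa⟩
  exact ⟨y, ⟨ha.trans_le hy.1, hfy⟩, fun z ⟨hz, hfz⟩ =>
    (strictAntiOn_sum_mul_pow_div_pow hc hc0 hn).injOn hz (ha.trans_le hy.1) (hfz.trans hfy.symm)⟩

end SumMulPowDivPow

/-- For `n ≥ 1`, the equation `φ_n(y) = y^n/(n-1)! - ∑_{i=0}^{n-1} y^i/i! = 0`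
has a unique positive solution. -/
theorem unique_positive_root_phi (n : ℕ) (hn : 1 ≤ n) :
    ∃! y : ℝ, 0 < y ∧
      y ^ n / (Nat.factorial (n - 1)) - ∑ i ∈ Finset.range n, y ^ i / (Nat.factorial i) = 0 := by
  have hF : (0 : ℝ) < Nat.factorial (n - 1) := by positivity
  have phi_eq_zero_iff : ∀ y : ℝ, 0 < y →
      (y ^ n / (Nat.factorial (n - 1)) - ∑ i ∈ range n, y ^ i / (Nat.factorial i) = 0 ↔
        (∑ i ∈ range n, (Nat.factorial i : ℝ)⁻¹ * y ^ i) / y ^ n =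
          (Nat.factorial (n - 1) : ℝ)⁻¹) := by
    intro y hy
    simp_rw [inv_mul_eq_div]
    rw [sub_eq_zero, div_eq_iff (pow_pos hy n).ne', eq_comm, ← div_eq_inv_mul]
  obtain ⟨y, ⟨hy, hfy⟩, huniq⟩ := existsUnique_pos_sum_mul_pow_div_pow_eq
    (c := fun i => (Nat.factorial i : ℝ)⁻¹) (fun i _ => by positivity) (by simp) hn (inv_pos.2 hF)
  exact ⟨y, ⟨hy, (phi_eq_zero_iff y hy).2 hfy⟩,
    fun z ⟨hz, hz0⟩ => huniq z ⟨hz, (phi_eq_zero_iff z hz).1 hz0⟩⟩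
end

section
/- Let c > 0, n ≥ 1, and f(p) = (1/p) · e^{-c/p} · Σ_{i=0}^{n-1} (c/p)^i/i! on (0,∞). Then f'(p) = (e^{-c/p}/p^2) · [ (c/p)^n/(n-1)! - Σ_{i=0}^{n-1} (c/p)^i/i! ]. Hence f is strictly increasing on (0, c/y_n) and strictly decreasing on (c/y_n, ∞), where y_n is the unique positive root of y^n/(n-1)! = Σ_{i=0}^{n-1} y^i/i!; in particular f attains a unique global maximum at p* = c/y_n. -/
/-!
With `y = c / p` and `S_n(y) = ∑_{i<n} y^i/i!`, the ratio is `f(p) = c⁻¹ φ(y)` where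
`φ(y) = y e^{-y} S_n(y)`. Since `S_n' = S_{n-1}`, one gets `φ'(y) = e^{-y} (S_n(y) - y^n/(n-1)!)`,
and the chain rule through `p ↦ c / p` gives the stated formula for `f'`. The sign of
`S_n(y) - y^n/(n-1)!` is that of `S_n(y)/y^n - 1/(n-1)! = ∑_{i<n} y^{-(n-i)}/i! - 1/(n-1)!`, which is
strictly decreasing in `y > 0`; so it vanishes only at `y_n`, is positive below and negative
above, and `f` increases up to `p = c/y_n` and decreases afterwards.
-/

open Real Set

noncomputable def expPartialSum (n : ℕ) (y : ℝ) : ℝ :=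
  ∑ i ∈ Finset.range n, y ^ i / i.factorial

noncomputable def gpr (c : ℝ) (n : ℕ) (p : ℝ) : ℝ :=
  1 / p * exp (-c / p) * expPartialSum n (c / p)

theorem expPartialSum_succ (n : ℕ) (y : ℝ) :
    expPartialSum (n + 1) y = expPartialSum n y + y ^ n / n.factorial :=
  Finset.sum_range_succ _ _

theorem hasDerivAt_expPartialSum_succ (n : ℕ) (y : ℝ) :
    HasDerivAt (expPartialSum (n + 1)) (expPartialSum n y) y := by
  induction n with
  | zero =>
    have hone : expPartialSum 1 = fun _ => 1 := funext fun y => by simp [expPartialSum]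
    simpa [hone, expPartialSum] using hasDerivAt_const y (1 : ℝ)
  | succ n ih =>
    have hpow : HasDerivAt (fun y : ℝ => y ^ (n + 1) / (n + 1).factorial)
        (y ^ n / n.factorial) y := by
      refine ((hasDerivAt_pow (n + 1) y).div_const ((n + 1).factorial : ℝ)).congr_deriv ?_
      rw [Nat.factorial_succ]
      push_cast
      field_simp
    rw [funext (expPartialSum_succ (n + 1)), expPartialSum_succ]
    exact ih.add hpow

theorem hasDerivAt_mul_exp_neg_mul_expPartialSum (n : ℕ) (y : ℝ) :
    HasDerivAt (fun y => y * exp (-y) * expPartialSum (n + 1) y)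
      (exp (-y) * (expPartialSum (n + 1) y - y ^ (n + 1) / n.factorial)) y := by
  have hexp : HasDerivAt (fun y => exp (-y)) (-exp (-y)) y := by
    simpa using (hasDerivAt_neg y).exp
  refine (((hasDerivAt_id y).mul hexp).mul (hasDerivAt_expPartialSum_succ n y)).congr_deriv ?_
  rw [expPartialSum_succ]
  simp only [id, Pi.mul_apply]
  ring

theorem hasDerivAt_gpr {c p : ℝ} (hc : c ≠ 0) (n : ℕ) (hp : p ≠ 0) :
    HasDerivAt (gpr c (n + 1))
      (exp (-c / p) / p ^ 2 *
        ((c / p) ^ (n + 1) / n.factorial - expPartialSum (n + 1) (c / p))) p := by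
  have hgpr : gpr c (n + 1) =
      fun p => c⁻¹ * ((c / p) * exp (-(c / p)) * expPartialSum (n + 1) (c / p)) := by
    funext p
    have hinv : 1 / p = c⁻¹ * (c / p) := by rw [mul_div_assoc', inv_mul_cancel₀ hc]
    rw [gpr, hinv, neg_div]
    ring
  have hcp : HasDerivAt (fun p => c / p) (-c / p ^ 2) p := by
    simpa [div_eq_mul_inv, neg_div] using (hasDerivAt_inv hp).const_mul c
  rw [hgpr]
  refine (((hasDerivAt_mul_exp_neg_mul_expPartialSum n (c / p)).comp p hcp).const_mul
    c⁻¹).congr_deriv ?_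
  field_simp
  ring

theorem expPartialSum_div_pow {y : ℝ} (hy : y ≠ 0) (n : ℕ) :
    expPartialSum n y / y ^ n = ∑ i ∈ Finset.range n, y⁻¹ ^ (n - i) / i.factorial := by
  rw [expPartialSum, Finset.sum_div]
  refine Finset.sum_congr rfl fun i hi => ?_
  have hin : n = i + (n - i) := by have := Finset.mem_range.1 hi; omega
  rw [hin, pow_add, inv_pow, Nat.add_sub_cancel_left]
  field_simp

theorem strictAntiOn_expPartialSum_div_pow {n : ℕ} (hn : n ≠ 0) :
    StrictAntiOn (fun y => expPartialSum n y / y ^ n) (Ioi 0) := by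
  intro y hy z hz hyz
  simp only [expPartialSum_div_pow hy.ne', expPartialSum_div_pow hz.ne']
  refine Finset.sum_lt_sum_of_nonempty (Finset.nonempty_range_iff.2 hn) fun i hi => ?_
  have hin : n - i ≠ 0 := by have := Finset.mem_range.1 hi; omega
  gcongr
  exact inv_nonneg.2 (le_of_lt hz)

section Root

variable {n : ℕ} {yn y : ℝ}

theorem expPartialSum_div_pow_of_root (hyn : 0 < yn)
    (hroot : yn ^ (n + 1) / n.factorial = expPartialSum (n + 1) yn) :
    expPartialSum (n + 1) yn / yn ^ (n + 1) = 1 / n.factorial := by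
  rw [← hroot]
  field_simp

theorem expPartialSum_lt_pow_div_factorial_iff (hyn : 0 < yn)
    (hroot : yn ^ (n + 1) / n.factorial = expPartialSum (n + 1) yn) (hy : 0 < y) :
    expPartialSum (n + 1) y < y ^ (n + 1) / n.factorial ↔ yn < y := by
  rw [← (strictAntiOn_expPartialSum_div_pow n.succ_ne_zero).lt_iff_gt hy hyn,
    expPartialSum_div_pow_of_root hyn hroot, div_lt_iff₀ (pow_pos hy _), div_mul_eq_mul_div,
    one_mul]

theorem pow_div_factorial_lt_expPartialSum_iff (hyn : 0 < yn)
    (hroot : yn ^ (n + 1) / n.factorial = expPartialSum (n + 1) yn) (hy : 0 < y) :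
    y ^ (n + 1) / n.factorial < expPartialSum (n + 1) y ↔ y < yn := by
  rw [← (strictAntiOn_expPartialSum_div_pow n.succ_ne_zero).lt_iff_gt hyn hy,
    expPartialSum_div_pow_of_root hyn hroot, lt_div_iff₀ (pow_pos hy _), div_mul_eq_mul_div,
    one_mul]

end Root

section Maximum

variable {c yn : ℝ} {n : ℕ}

theorem strictMonoOn_gpr (hc : 0 < c) (hyn : 0 < yn)
    (hroot : yn ^ (n + 1) / n.factorial = expPartialSum (n + 1) yn) :
    StrictMonoOn (gpr c (n + 1)) (Ioc 0 (c / yn)) := by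
  refine strictMonoOn_of_deriv_pos (convex_Ioc _ _)
    (fun p hp => (hasDerivAt_gpr hc.ne' n hp.1.ne').continuousAt.continuousWithinAt) ?_
  rw [interior_Ioc]
  rintro p ⟨hp, hpc⟩
  have hyn_lt : yn < c / p := by rwa [lt_div_comm₀ hyn hp]
  rw [(hasDerivAt_gpr hc.ne' n hp.ne').deriv]
  exact mul_pos (by positivity) (sub_pos.2
    ((expPartialSum_lt_pow_div_factorial_iff hyn hroot (div_pos hc hp)).2 hyn_lt))

theorem strictAntiOn_gpr (hc : 0 < c) (hyn : 0 < yn)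
    (hroot : yn ^ (n + 1) / n.factorial = expPartialSum (n + 1) yn) :
    StrictAntiOn (gpr c (n + 1)) (Ici (c / yn)) := by
  have hcy : 0 < c / yn := div_pos hc hyn
  refine strictAntiOn_of_deriv_neg (convex_Ici _) (fun p hp =>
    (hasDerivAt_gpr hc.ne' n (hcy.trans_le hp).ne').continuousAt.continuousWithinAt) ?_
  rw [interior_Ici]
  intro p hp
  have hp0 : 0 < p := hcy.trans hp
  have hlt_yn : c / p < yn := by rwa [div_lt_comm₀ hp0 hyn]
  rw [(hasDerivAt_gpr hc.ne' n hp0.ne').deriv]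
  exact mul_neg_of_pos_of_neg (by positivity) (sub_neg.2
    ((pow_div_factorial_lt_expPartialSum_iff hyn hroot (div_pos hc hp0)).2 hlt_yn))

end Maximum

theorem gpr_miso_maximum_general (c : ℝ) (hc : 0 < c) (n : ℕ) (hn : 1 ≤ n) (yn : ℝ) (hyn : 0 < yn)
    (hroot : yn ^ n / (Nat.factorial (n - 1)) = ∑ i ∈ Finset.range n, yn ^ i / (Nat.factorial i)) :
    (∀ p : ℝ, 0 < p →
      deriv (fun p : ℝ =>
          (1 / p) * Real.exp (-c / p) * ∑ i ∈ Finset.range n, (c / p) ^ i / (Nat.factorial i)) p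
        = Real.exp (-c / p) / p ^ 2 *
            ((c / p) ^ n / (Nat.factorial (n - 1)) -
              ∑ i ∈ Finset.range n, (c / p) ^ i / (Nat.factorial i))) ∧
    StrictMonoOn (fun p : ℝ =>
        (1 / p) * Real.exp (-c / p) * ∑ i ∈ Finset.range n, (c / p) ^ i / (Nat.factorial i))
      (Ioo 0 (c / yn)) ∧
    StrictAntiOn (fun p : ℝ =>
        (1 / p) * Real.exp (-c / p) * ∑ i ∈ Finset.range n, (c / p) ^ i / (Nat.factorial i))
      (Ioi (c / yn)) ∧
    (∀ p : ℝ, 0 < p → p ≠ c / yn →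
      (1 / p) * Real.exp (-c / p) * ∑ i ∈ Finset.range n, (c / p) ^ i / (Nat.factorial i)
        < (1 / (c / yn)) * Real.exp (-c / (c / yn)) *
            ∑ i ∈ Finset.range n, (c / (c / yn)) ^ i / (Nat.factorial i)) := by
  obtain ⟨m, rfl⟩ : ∃ m, n = m + 1 := ⟨n - 1, by omega⟩
  simp only [Nat.add_sub_cancel] at hroot ⊢
  have hmono := strictMonoOn_gpr hc hyn hroot
  have hanti := strictAntiOn_gpr hc hyn hroot
  refine ⟨fun p hp => (hasDerivAt_gpr hc.ne' m hp.ne').deriv, hmono.mono Ioo_subset_Ioc_self,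
    hanti.mono Ioi_subset_Ici_self, fun p hp hne => ?_⟩
  rcases hne.lt_or_gt with hlt | hgt
  · exact hmono ⟨hp, hlt.le⟩ ⟨div_pos hc hyn, le_rfl⟩ hlt
  · exact hanti self_mem_Ici hgt.le hgt

/-- For `c > 0`, `n ≥ 1`, the GPR `f(p) = (1/p) e^{-c/p} ∑_{i<n} (c/p)^i/i!` has derivative
`f'(p) = (e^{-c/p}/p²)·[(c/p)^n/(n-1)! - ∑_{i<n}(c/p)^i/i!]`; with `y_n` the unique positive
root of `y^n/(n-1)! = ∑_{i<n} y^i/i!`, `f` is strictly increasing on `(0, c/y_n)`, strictly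
decreasing on `(c/y_n, ∞)`, and attains a unique global maximum at `p* = c/y_n`. -/
theorem gpr_miso_maximum (c : ℝ) (hc : 0 < c) (n : ℕ) (hn : 1 ≤ n) (yn : ℝ) (hyn : 0 < yn)
    (hroot : yn ^ n / (Nat.factorial (n - 1)) = ∑ i ∈ Finset.range n, yn ^ i / (Nat.factorial i))
    (huniq : ∀ y : ℝ, 0 < y →
      y ^ n / (Nat.factorial (n - 1)) = ∑ i ∈ Finset.range n, y ^ i / (Nat.factorial i) →
      y = yn) :
    (∀ p : ℝ, 0 < p →
      deriv (fun p : ℝ =>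
          (1 / p) * Real.exp (-c / p) * ∑ i ∈ Finset.range n, (c / p) ^ i / (Nat.factorial i)) p
        = Real.exp (-c / p) / p ^ 2 *
            ((c / p) ^ n / (Nat.factorial (n - 1)) -
              ∑ i ∈ Finset.range n, (c / p) ^ i / (Nat.factorial i))) ∧
    StrictMonoOn (fun p : ℝ =>
        (1 / p) * Real.exp (-c / p) * ∑ i ∈ Finset.range n, (c / p) ^ i / (Nat.factorial i))
      (Ioo 0 (c / yn)) ∧
    StrictAntiOn (fun p : ℝ =>
        (1 / p) * Real.exp (-c / p) * ∑ i ∈ Finset.range n, (c / p) ^ i / (Nat.factorial i))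
      (Ioi (c / yn)) ∧
    (∀ p : ℝ, 0 < p → p ≠ c / yn →
      (1 / p) * Real.exp (-c / p) * ∑ i ∈ Finset.range n, (c / p) ^ i / (Nat.factorial i)
        < (1 / (c / yn)) * Real.exp (-c / (c / yn)) *
            ∑ i ∈ Finset.range n, (c / (c / yn)) ^ i / (Nat.factorial i)) :=
  gpr_miso_maximum_general c hc n hn yn hyn hroot
end

section
/- Let S : (0,∞) → (0,1) be differentiable, strictly increasing, with lim_{p→0+} S(p) = 0, and suppose there exists p₀ > 0 such that S is convex on (0,p₀] and concave on [p₀,∞). Then the function p ↦ S(p)/p is quasi-concave on (0,∞) and attains a global maximum at some p* ≥ p₀, characterized (when S is C¹) by p* S'(p*) = S(p*). -/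
/-!
Write `g p = S p / p`. On `(0, p₀]` convexity makes the secant slopes from the origin
nondecreasing; since `S(0⁺) = 0`, these slopes are exactly the values of `g`, so `g` is monotone
there. On `[p₀, ∞)` the set `{g ≥ γ}` is `{S - γ · id ≥ 0}`, a superlevel set of a concave
function, hence an interval. Gluing the two pieces gives quasi-concavity on `(0, ∞)`. Since `S < 1`,
`g p ≤ 1 / p → 0`, so `g` attains its maximum on `[p₀, ∞)` at some `p*`, which by monotonicity is
a global maximum; Fermat's rule for `g` at `p*` is the equation `p* S'(p*) = S(p*)`.
-/

open Real Set Filter Topology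

lemma tendsto_secant_of_tendsto_zero {f : ℝ → ℝ} (hlim : Tendsto f (𝓝[>] 0) (𝓝 0))
    {x : ℝ} (hx : x ≠ 0) :
    Tendsto (fun a => (f x - f a) / (x - a)) (𝓝[>] 0) (𝓝 (f x / x)) := by
  have hid : Tendsto (fun a : ℝ => a) (𝓝[>] 0) (𝓝 0) :=
    tendsto_nhdsWithin_of_tendsto_nhds tendsto_id
  rw [show f x / x = (f x - 0) / (x - 0) by simp]
  exact (tendsto_const_nhds.sub hlim).div (tendsto_const_nhds.sub hid) (by simpa using hx)

lemma ConvexOn.monotoneOn_div_self {f : ℝ → ℝ} {c : ℝ} (hf : ConvexOn ℝ (Ioc 0 c) f)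
    (hlim : Tendsto f (𝓝[>] 0) (𝓝 0)) :
    MonotoneOn (fun x => f x / x) (Ioc 0 c) := by
  intro x hx y hy hxy
  have hsecant : ∀ᶠ a in 𝓝[>] 0, (f x - f a) / (x - a) ≤ (f y - f a) / (y - a) := by
    filter_upwards [Ioo_mem_nhdsGT hx.1] with a ha
    exact hf.secant_mono ⟨ha.1, ha.2.le.trans hx.2⟩ hx hy ha.2.ne' (ha.2.trans_le hxy).ne' hxy
  exact le_of_tendsto_of_tendsto (tendsto_secant_of_tendsto_zero hlim hx.1.ne')
    (tendsto_secant_of_tendsto_zero hlim hy.1.ne') hsecant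

lemma ConcaveOn.quasiconcaveOn_div_self {f : ℝ → ℝ} {s : Set ℝ} (hf : ConcaveOn ℝ s f)
    (hs : s ⊆ Ioi 0) :
    QuasiconcaveOn ℝ s (fun x => f x / x) := by
  intro γ
  have hlin : ConvexOn ℝ s (fun x => γ * x) := (LinearMap.mul ℝ ℝ γ).convexOn hf.1
  convert (hf.sub hlin).convex_ge 0 using 1
  ext x
  simp only [mem_ofPred_eq, Pi.sub_apply, sub_nonneg]
  exact and_congr_right fun hx => le_div_iff₀ (hs hx)

lemma quasiconcaveOn_Ioi_of_monotoneOn_of_quasiconcaveOn {g : ℝ → ℝ} {a c : ℝ}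
    (hmono : MonotoneOn g (Ioc a c)) (hqc : QuasiconcaveOn ℝ (Ici c) g) :
    QuasiconcaveOn ℝ (Ioi a) g := by
  intro γ
  refine convex_iff_ordConnected.2 ⟨fun x ⟨hxa, hxγ⟩ y ⟨_, hyγ⟩ z ⟨hxz, hzy⟩ => ?_⟩
  refine ⟨hxa.trans_le hxz, ?_⟩
  rcases le_or_gt z c with hzc | hcz
  · exact hxγ.trans (hmono ⟨hxa, hxz.trans hzc⟩ ⟨hxa.trans_le hxz, hzc⟩ hxz)
  have hupper : OrdConnected {x | x ∈ Ici c ∧ γ ≤ g x} := (hqc γ).ordConnected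
  rcases le_or_gt c x with hcx | hxc
  · exact (hupper.out ⟨hcx, hxγ⟩ ⟨hcx.trans (hxz.trans hzy), hyγ⟩ ⟨hxz, hzy⟩).2
  · have hcγ : γ ≤ g c := hxγ.trans (hmono ⟨hxa, hxc.le⟩ ⟨hxa.trans hxc, le_rfl⟩ hxc.le)
    exact (hupper.out ⟨self_mem_Ici, hcγ⟩ ⟨hcz.le.trans hzy, hyγ⟩ ⟨hcz.le, hzy⟩).2

lemma isMaxOn_Ioi_of_monotoneOn_of_isMaxOn_Ici {g : ℝ → ℝ} {a c x : ℝ} (hac : a < c)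
    (hmono : MonotoneOn g (Ioc a c)) (hmax : IsMaxOn g (Ici c) x) :
    IsMaxOn g (Ioi a) x := by
  intro p hp
  rcases le_or_gt p c with hpc | hcp
  · exact (hmono ⟨hp, hpc⟩ ⟨hac, le_rfl⟩ hpc).trans (hmax (self_mem_Ici (a := c)))
  · exact hmax hcp.le

lemma ContinuousOn.exists_isMaxOn_Ici_of_tendsto_atTop {g : ℝ → ℝ} {c : ℝ}
    (hg : ContinuousOn g (Ici c)) (hc : 0 < g c) (hlim : Tendsto g atTop (𝓝 0)) :
    ∃ x ∈ Ici c, IsMaxOn g (Ici c) x := by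
  refine hg.exists_isMaxOn' isClosed_Ici self_mem_Ici ?_
  rw [cocompact_eq_atBot_atTop, inf_sup_right, (disjoint_atBot_principal_Ici c).eq_bot,
    bot_sup_eq]
  exact (hlim.eventually (ge_mem_nhds hc)).filter_mono inf_le_left

lemma tendsto_div_self_atTop_zero {f : ℝ → ℝ} (hf : ∀ x, 0 < x → f x ∈ Ioo (0 : ℝ) 1) :
    Tendsto (fun x => f x / x) atTop (𝓝 0) := by
  refine tendsto_of_tendsto_of_tendsto_of_le_of_le' tendsto_const_nhds
    tendsto_inv_atTop_zero ?_ ?_ <;> filter_upwards [eventually_gt_atTop 0] with x hx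
  · exact div_nonneg (hf x hx).1.le hx.le
  · simpa [div_eq_mul_inv] using mul_le_of_le_one_left (inv_nonneg.2 hx.le) (hf x hx).2.le

lemma IsLocalMax.mul_deriv_eq_of_div_self {f : ℝ → ℝ} {x : ℝ}
    (hmax : IsLocalMax (fun p => f p / p) x) (hf : DifferentiableAt ℝ f x) (hx : x ≠ 0) :
    x * deriv f x = f x := by
  have hderiv := hmax.hasDerivAt_eq_zero (hf.hasDerivAt.div (hasDerivAt_id x) hx)
  field_simp at hderiv
  linarith

theorem sigmoidal_ratio_quasiconcave_general (S : ℝ → ℝ) (p₀ : ℝ) (hp₀ : 0 < p₀)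
    (hdiff : ∀ p : ℝ, 0 < p → DifferentiableAt ℝ S p)
    (hrange : ∀ p : ℝ, 0 < p → S p ∈ Ioo (0 : ℝ) 1)
    (hlim : Tendsto S (nhdsWithin 0 (Ioi 0)) (nhds 0))
    (hconv : ConvexOn ℝ (Ioc 0 p₀) S)
    (hconc : ConcaveOn ℝ (Ici p₀) S) :
    QuasiconcaveOn ℝ (Ioi 0) (fun p => S p / p) ∧
    ∃ pstar : ℝ, p₀ ≤ pstar ∧ (∀ p : ℝ, 0 < p → S p / p ≤ S pstar / pstar) ∧
      pstar * deriv S pstar = S pstar := by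
  have hmono := hconv.monotoneOn_div_self hlim
  have hcont : ContinuousOn (fun p => S p / p) (Ici p₀) := fun p hp =>
    have hp : 0 < p := hp₀.trans_le hp
    ((hdiff p hp).continuousAt.div continuousAt_id hp.ne').continuousWithinAt
  obtain ⟨pstar, hpstar, hmaxIci⟩ := hcont.exists_isMaxOn_Ici_of_tendsto_atTop
    (div_pos (hrange p₀ hp₀).1 hp₀) (tendsto_div_self_atTop_zero hrange)
  have hmax := isMaxOn_Ioi_of_monotoneOn_of_isMaxOn_Ici hp₀ hmono hmaxIci
  have hpos : 0 < pstar := hp₀.trans_le hpstar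
  refine ⟨quasiconcaveOn_Ioi_of_monotoneOn_of_quasiconcaveOn hmono
      (hconc.quasiconcaveOn_div_self fun p hp => hp₀.trans_le hp),
    pstar, hpstar, fun p hp => hmax hp, ?_⟩
  exact (hmax.isLocalMax (Ioi_mem_nhds hpos)).mul_deriv_eq_of_div_self (hdiff pstar hpos) hpos.ne'

/-- If `S : (0,∞) → (0,1)` is differentiable, strictly increasing, tends to `0` at `0⁺`,
is convex on `(0,p₀]` and concave on `[p₀,∞)` (sigmoidal), then `p ↦ S(p)/p` is
quasi-concave on `(0,∞)` and attains a global maximum at some `p* ≥ p₀` satisfying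
`p* S'(p*) = S(p*)`. -/
theorem sigmoidal_ratio_quasiconcave (S : ℝ → ℝ) (p₀ : ℝ) (hp₀ : 0 < p₀)
    (hdiff : ∀ p : ℝ, 0 < p → DifferentiableAt ℝ S p)
    (hmono : StrictMonoOn S (Ioi 0))
    (hrange : ∀ p : ℝ, 0 < p → S p ∈ Ioo (0 : ℝ) 1)
    (hlim : Tendsto S (nhdsWithin 0 (Ioi 0)) (nhds 0))
    (hconv : ConvexOn ℝ (Ioc 0 p₀) S)
    (hconc : ConcaveOn ℝ (Ici p₀) S) :
    QuasiconcaveOn ℝ (Ioi 0) (fun p => S p / p) ∧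
    ∃ pstar : ℝ, p₀ ≤ pstar ∧ (∀ p : ℝ, 0 < p → S p / p ≤ S pstar / pstar) ∧
      pstar * deriv S pstar = S pstar :=
  sigmoidal_ratio_quasiconcave_general S p₀ hp₀ hdiff hrange hlim hconv hconc
end

section
/- Quasi-concavity can fail for the two-variable TISO energy-efficiency: there exist c > 0 and q > 0 such that, with Γ(p₁,p₂) = (1 - P_out(p₁,p₂))/(p₁+p₂) where P_out(p₁,p₂) = Pr[p₁|h₁|² + p₂|h₂|² ≤ c] for independent Exp(1) random variables |h₁|²,|h₂|², one has Γ(q,0) = Γ(0,q) > Γ(q/2, q/2). Consequently the upper-level set {(p₁,p₂) : Γ(p₁,p₂) ≥ Γ(q,0)} contains (q,0) and (0,q) but not their midpoint, so Γ is not quasi-concave on ℝ₊². -/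
open MeasureTheory ProbabilityTheory Set Real

/-!
For `Exp(1)` gains, `P[X ≤ t] = 1 - e^{-t}` and, by convolution,
`P[X₁ + X₂ ≤ t] = 1 - e^{-t} (1 + t)` for `t ≥ 0`. Hence `Γ(q, 0) = Γ(0, q) = e^{-c/q} / q` while
`Γ(q/2, q/2) = e^{-2c/q} (1 + 2c/q) / q`, and the latter is smaller as soon as `1 + 2c/q < e^{c/q}`,
e.g. for `c/q = 3`. Then the superlevel set of `Γ` at the level `Γ(q, 0)` contains `(q, 0)` and
`(0, q)` but not their midpoint.
-/

theorem not_quasiconcaveOn_of_lt_min {𝕜 E β : Type*} [Semiring 𝕜] [PartialOrder 𝕜]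
    [AddCommMonoid E] [LinearOrder β] [SMul 𝕜 E] {s : Set E} {f : E → β} {x y : E}
    (hx : x ∈ s) (hy : y ∈ s) {a b : 𝕜} (ha : 0 ≤ a) (hb : 0 ≤ b) (hab : a + b = 1)
    (h : f (a • x + b • y) < min (f x) (f y)) : ¬QuasiconcaveOn 𝕜 s f :=
  fun hf => h.not_ge ((quasiconcaveOn_iff_min_le.1 hf).2 hx hy ha hb hab)

theorem integral_expMeasure {r : ℝ} (hr : 0 < r) (g : ℝ → ℝ) :
    ∫ x, g x ∂expMeasure r = ∫ x in Ici 0, r * exp (-(r * x)) * g x := by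
  rw [expMeasure, gammaMeasure, integral_withDensity_eq_integral_toReal_smul (f := gammaPDF 1 r)
    (measurable_gammaPDFReal 1 r).ennreal_ofReal (.of_forall fun _ => ENNReal.ofReal_lt_top),
    ← integral_indicator measurableSet_Ici]
  congr 1 with x
  by_cases hx : 0 ≤ x <;> simp [gammaPDF, gammaPDFReal, hx, hr.le, (exp_pos _).le]

theorem expMeasure_real_Iic {r : ℝ} (hr : 0 < r) (t : ℝ) :
    (expMeasure r).real (Iic t) = if 0 ≤ t then 1 - exp (-(r * t)) else 0 := by
  have := isProbabilityMeasure_expMeasure hr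
  rw [← cdf_eq_real, cdf_expMeasure_eq hr]

theorem expMeasure_prod_real_add_le {r : ℝ} (hr : 0 < r) {t : ℝ} (ht : 0 ≤ t) :
    ((expMeasure r).prod (expMeasure r)).real {p | p.1 + p.2 ≤ t}
      = 1 - exp (-(r * t)) * (1 + r * t) := by
  have := isProbabilityMeasure_expMeasure hr
  have hs : MeasurableSet {p : ℝ × ℝ | p.1 + p.2 ≤ t} :=
    measurableSet_le (by fun_prop) (by fun_prop)
  have hslice (x : ℝ) : Prod.mk x ⁻¹' {p : ℝ × ℝ | p.1 + p.2 ≤ t} = Iic (t - x) := by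
    ext y; simp [le_sub_iff_add_le']
  have hintegrand : EqOn (fun x => r * exp (-(r * x)) * (expMeasure r).real (Iic (t - x)))
      ((Iic t).indicator fun x => r * exp (-(r * x)) - r * exp (-(r * t))) (Ici 0) := by
    intro x _
    dsimp only
    by_cases hx : x ≤ t
    · rw [expMeasure_real_Iic hr, if_pos (sub_nonneg.2 hx), indicator_of_mem (mem_Iic.2 hx),
        mul_sub, mul_one, mul_assoc, ← exp_add]
      ring_nf
    · rw [expMeasure_real_Iic hr, if_neg (by linarith), indicator_of_notMem (mt mem_Iic.1 hx),
        mul_zero]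
  have hderiv (x : ℝ) : HasDerivAt (fun x => -exp (-(r * x)) - r * exp (-(r * t)) * x)
      (r * exp (-(r * x)) - r * exp (-(r * t))) x := by
    refine (((hasDerivAt_id' x).const_mul r).neg.exp.neg.sub
      ((hasDerivAt_id' x).const_mul (r * exp (-(r * t))))).congr_deriv ?_
    simp only [Pi.neg_apply, mul_one]
    ring
  rw [measureReal_def, Measure.prod_apply hs,
    ← integral_toReal (measurable_measure_prodMk_left hs).aemeasurable
      (.of_forall fun _ => measure_lt_top _ _),
    integral_expMeasure hr]
  simp_rw [hslice, ← measureReal_def]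
  rw [setIntegral_congr_fun measurableSet_Ici hintegrand, setIntegral_indicator measurableSet_Iic,
    Ici_inter_Iic, integral_Icc_eq_integral_Ioc, ← intervalIntegral.integral_of_le ht,
    intervalIntegral.integral_eq_sub_of_hasDerivAt (fun x _ => hderiv x)
      (by apply Continuous.intervalIntegrable; fun_prop)]
  simp only [mul_zero, neg_zero, exp_zero, sub_zero, sub_neg_eq_add]
  ring

section Outage

variable {Ω : Type*} [MeasurableSpace Ω] {μ : Measure Ω} {r : ℝ}

theorem measureReal_le_of_map_eq_expMeasure {X : Ω → ℝ} (hX : Measurable X)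
    (hd : μ.map X = expMeasure r) (hr : 0 < r) {t : ℝ} (ht : 0 ≤ t) :
    μ.real {ω | X ω ≤ t} = 1 - exp (-(r * t)) := by
  rw [show {ω | X ω ≤ t} = X ⁻¹' Iic t from rfl, ← map_measureReal_apply hX measurableSet_Iic, hd,
    expMeasure_real_Iic hr, if_pos ht]

theorem measureReal_add_le_of_indepFun [IsFiniteMeasure μ] {X₁ X₂ : Ω → ℝ}
    (hX₁ : Measurable X₁) (hX₂ : Measurable X₂) (hindep : IndepFun X₁ X₂ μ)
    (hd₁ : μ.map X₁ = expMeasure r) (hd₂ : μ.map X₂ = expMeasure r) (hr : 0 < r) {t : ℝ}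
    (ht : 0 ≤ t) :
    μ.real {ω | X₁ ω + X₂ ω ≤ t} = 1 - exp (-(r * t)) * (1 + r * t) := by
  have hmap : μ.map (fun ω => (X₁ ω, X₂ ω)) = (expMeasure r).prod (expMeasure r) := by
    rw [(indepFun_iff_map_prod_eq_prod_map_map hX₁.aemeasurable hX₂.aemeasurable).1 hindep,
      hd₁, hd₂]
  rw [show {ω | X₁ ω + X₂ ω ≤ t} = (fun ω => (X₁ ω, X₂ ω)) ⁻¹' {p | p.1 + p.2 ≤ t} from rfl,
    ← map_measureReal_apply (hX₁.prodMk hX₂) (measurableSet_le (by fun_prop) (by fun_prop)),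
    hmap, expMeasure_prod_real_add_le hr ht]

/-- The energy efficiency `Γ(p₁, p₂)` of the power allocation `P = (p₁, p₂)` for the outage
threshold `c`. -/
noncomputable def energyEfficiency (μ : Measure Ω) (X₁ X₂ : Ω → ℝ) (c : ℝ) (P : ℝ × ℝ) : ℝ :=
  (1 - μ.real {ω | P.1 * X₁ ω + P.2 * X₂ ω ≤ c}) / (P.1 + P.2)

theorem energyEfficiency_swap (X₁ X₂ : Ω → ℝ) (c : ℝ) (P : ℝ × ℝ) :
    energyEfficiency μ X₁ X₂ c P.swap = energyEfficiency μ X₂ X₁ c P := by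
  simp only [energyEfficiency, Prod.fst_swap, Prod.snd_swap, add_comm]

theorem energyEfficiency_fst {X₁ : Ω → ℝ} (X₂ : Ω → ℝ) (hX₁ : Measurable X₁)
    (hd₁ : μ.map X₁ = expMeasure r) (hr : 0 < r) {c q : ℝ} (hc : 0 ≤ c) (hq : 0 < q) :
    energyEfficiency μ X₁ X₂ c (q, 0) = exp (-(r * c / q)) / q := by
  have hset : {ω | q * X₁ ω + 0 * X₂ ω ≤ c} = {ω | X₁ ω ≤ c / q} := by
    ext ω
    change q * X₁ ω + 0 * X₂ ω ≤ c ↔ X₁ ω ≤ c / q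
    rw [zero_mul, add_zero, le_div_iff₀ hq, mul_comm]
  rw [energyEfficiency, hset, measureReal_le_of_map_eq_expMeasure hX₁ hd₁ hr (by positivity)]
  ring_nf

theorem energyEfficiency_half [IsFiniteMeasure μ] {X₁ X₂ : Ω → ℝ} (hX₁ : Measurable X₁)
    (hX₂ : Measurable X₂) (hindep : IndepFun X₁ X₂ μ) (hd₁ : μ.map X₁ = expMeasure r)
    (hd₂ : μ.map X₂ = expMeasure r) (hr : 0 < r) {c q : ℝ} (hc : 0 ≤ c) (hq : 0 < q) :
    energyEfficiency μ X₁ X₂ c (q / 2, q / 2)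
      = exp (-(2 * (r * c / q))) * (1 + 2 * (r * c / q)) / q := by
  have hset : {ω | q / 2 * X₁ ω + q / 2 * X₂ ω ≤ c} = {ω | X₁ ω + X₂ ω ≤ 2 * c / q} := by
    ext ω
    change q / 2 * X₁ ω + q / 2 * X₂ ω ≤ c ↔ X₁ ω + X₂ ω ≤ 2 * c / q
    rw [le_div_iff₀ hq]
    constructor <;> intro h <;> linarith
  rw [energyEfficiency, hset,
    measureReal_add_le_of_indepFun hX₁ hX₂ hindep hd₁ hd₂ hr (by positivity)]
  ring_nf

end Outage

theorem exp_neg_two_mul_mul_lt_exp_neg {t : ℝ} (ht : 1 + 2 * t < exp t) :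
    exp (-(2 * t)) * (1 + 2 * t) < exp (-t) := by
  have h : exp (-t) * (1 + 2 * t) < 1 := by
    rwa [exp_neg, inv_mul_lt_iff₀ (exp_pos t), mul_one]
  calc exp (-(2 * t)) * (1 + 2 * t) = exp (-t) * (exp (-t) * (1 + 2 * t)) := by
        rw [two_mul, neg_add, exp_add, mul_assoc]
    _ < exp (-t) := mul_lt_of_lt_one_right (exp_pos _) h

/-- TISO energy-efficiency is not quasi-concave: for independent `Exp(1)` random variables
`|h₁|², |h₂|²`, there exist `c > 0` and `q > 0` such that the GPR
`Γ(p₁,p₂) = (1 - P[p₁|h₁|² + p₂|h₂|² ≤ c])/(p₁+p₂)` satisfies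
`Γ(q,0) = Γ(0,q) > Γ(q/2,q/2)`, and `Γ` is not quasi-concave on `ℝ₊²`. -/
theorem tiso_not_quasiconcave {Ω : Type*} [MeasureSpace Ω]
    [IsProbabilityMeasure (ℙ : Measure Ω)] (X₁ X₂ : Ω → ℝ)
    (hm₁ : Measurable X₁) (hm₂ : Measurable X₂) (hindep : IndepFun X₁ X₂ ℙ)
    (hd₁ : Measure.map X₁ ℙ = expMeasure 1) (hd₂ : Measure.map X₂ ℙ = expMeasure 1) :
    ∃ c : ℝ, 0 < c ∧ ∃ q : ℝ, 0 < q ∧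
      ((1 - (ℙ {ω | q * X₁ ω + 0 * X₂ ω ≤ c}).toReal) / (q + 0)
          = (1 - (ℙ {ω | 0 * X₁ ω + q * X₂ ω ≤ c}).toReal) / (0 + q)) ∧
      ((1 - (ℙ {ω | q / 2 * X₁ ω + q / 2 * X₂ ω ≤ c}).toReal) / (q / 2 + q / 2)
          < (1 - (ℙ {ω | q * X₁ ω + 0 * X₂ ω ≤ c}).toReal) / (q + 0)) ∧
      ¬ QuasiconcaveOn ℝ {P : ℝ × ℝ | 0 ≤ P.1 ∧ 0 ≤ P.2}
          (fun P : ℝ × ℝ =>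
            (1 - (ℙ {ω | P.1 * X₁ ω + P.2 * X₂ ω ≤ c}).toReal) / (P.1 + P.2)) := by
  set Γ := energyEfficiency (ℙ : Measure Ω) X₁ X₂ 3
  have hΓ₁ : Γ (1, 0) = exp (-3) := by
    simpa using energyEfficiency_fst X₂ hm₁ hd₁ one_pos (c := 3) (by norm_num) one_pos
  have hΓ₂ : Γ (0, 1) = exp (-3) := by
    have := energyEfficiency_fst X₁ hm₂ hd₂ one_pos (c := 3) (by norm_num) one_pos
    rw [← energyEfficiency_swap] at this
    simpa using this
  have hΓmid : Γ (1 / 2, 1 / 2) = exp (-(2 * 3)) * (1 + 2 * 3) := by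
    simpa only [one_mul, div_one] using
      energyEfficiency_half hm₁ hm₂ hindep hd₁ hd₂ one_pos (c := 3) (by norm_num) one_pos
  have hlt : Γ (1 / 2, 1 / 2) < Γ (1, 0) := by
    rw [hΓmid, hΓ₁]
    refine exp_neg_two_mul_mul_lt_exp_neg ?_
    linarith [quadratic_le_exp_of_nonneg (zero_le_three (α := ℝ))]
  refine ⟨3, three_pos, 1, one_pos, hΓ₁.trans hΓ₂.symm, hlt, ?_⟩
  have hmid : (1 / 2 : ℝ) • ((1 : ℝ), (0 : ℝ)) + (1 / 2 : ℝ) • ((0 : ℝ), (1 : ℝ))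
      = (1 / 2, 1 / 2) := by
    norm_num
  refine not_quasiconcaveOn_of_lt_min (f := Γ) (x := (1, 0)) (y := (0, 1)) (by norm_num)
    (by norm_num) (by norm_num) (by norm_num) (add_halves 1) ?_
  rwa [hmid, hΓ₂, ← hΓ₁, min_self]
end
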